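/- arXiv:2101.03734 — 5 statements merged into one kernel-verified Lean document; each statement's English description precedes it below -/
import Mathlib

section
/- Let α, β, γ > 0 with α + β + γ = π and α ≤ β ≤ γ. Then π·sin(α)/(sin(α) + sin(β) + sin(γ)) ≥ α, with equality if and only if α = π/3. -/
open Real

lemma key_sin_div {x y : ℝ} (hx : 0 < x) (hxy : x < y) (hy : y ≤ π) :
    x * Real.sin y < y * Real.sin x := by
  have hy0 : 0 < y := hx.trans hxy
  have hb : 0 < x / y := div_pos hx hy0
  have hb1 : x / y < 1 := (div_lt_one hy0).2 hxy
  have ha : 0 < 1 - x / y := by linarith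
  have hc := strictConcaveOn_sin_Icc.2 (Set.mem_Icc.2 ⟨le_refl 0, Real.pi_pos.le⟩)
      (Set.mem_Icc.2 ⟨hy0.le, hy⟩) hy0.ne ha hb (by ring)
  simp only [smul_eq_mul, mul_zero, Real.sin_zero, zero_add] at hc
  rw [div_mul_cancel₀ _ hy0.ne'] at hc
  rw [div_mul_eq_mul_div, div_lt_iff₀ hy0] at hc
  linarith

theorem stmt_2 (α β γ : ℝ) (hα : 0 < α) (hβ : 0 < β) (hγ : 0 < γ)
    (hsum : α + β + γ = π) (hab : α ≤ β) (hbc : β ≤ γ) :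
    π * Real.sin α / (Real.sin α + Real.sin β + Real.sin γ) ≥ α ∧
    (π * Real.sin α / (Real.sin α + Real.sin β + Real.sin γ) = α ↔ α = π / 3) := by
  have hαπ : α < π := by linarith
  have hβπ : β < π := by linarith
  have hγπ : γ < π := by linarith
  have hsa : 0 < Real.sin α := Real.sin_pos_of_pos_of_lt_pi hα hαπ
  have hsb : 0 < Real.sin β := Real.sin_pos_of_pos_of_lt_pi hβ hβπ
  have hsc : 0 < Real.sin γ := Real.sin_pos_of_pos_of_lt_pi hγ hγπ
  set S := Real.sin α + Real.sin β + Real.sin γ with hS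
  have hS0 : 0 < S := by positivity
  -- non-strict inequalities
  have h1 : α * Real.sin β ≤ β * Real.sin α := by
    rcases eq_or_lt_of_le hab with h | h
    · rw [h]
    · exact (key_sin_div hα h hβπ.le).le
  have h2 : α * Real.sin γ ≤ γ * Real.sin α := by
    rcases eq_or_lt_of_le (hab.trans hbc) with h | h
    · rw [h]
    · exact (key_sin_div hα h hγπ.le).le
  have hmain : α * S ≤ π * Real.sin α := by
    have : α * S = α * Real.sin α + α * Real.sin β + α * Real.sin γ := by ring
    nlinarith [hsum]
  have hge : π * Real.sin α / S ≥ α := (le_div_iff₀ hS0).2 (by linarith)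
  refine ⟨hge, ?_, ?_⟩
  · intro heq
    have heq' : π * Real.sin α = α * S := by
      field_simp at heq
      linarith
    -- show α = β and α = γ
    by_contra hne
    have hαβ : α = β := by
      by_contra h
      have hlt : α < β := lt_of_le_of_ne hab h
      have := key_sin_div hα hlt hβπ.le
      nlinarith [h2]
    have hαγ : α = γ := by
      by_contra h
      have hlt : α < γ := lt_of_le_of_ne (hab.trans hbc) h
      have := key_sin_div hα hlt hγπ.le
      nlinarith [h1]
    apply hne
    rw [← hαβ, ← hαγ] at hsum
    linarith
  · intro heq
    have hβe : β = π / 3 := by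
      by_contra h
      have h' : π / 3 < β := lt_of_le_of_ne (by linarith) (Ne.symm h)
      linarith
    have hγe : γ = π / 3 := by linarith
    rw [hS, heq, hβe, hγe]
    have hp := Real.pi_pos
    have h3 : Real.sin (π / 3) ≠ 0 := by
      have h0 : (0:ℝ) < π / 3 := by linarith
      exact (Real.sin_pos_of_pos_of_lt_pi h0 (by linarith)).ne'
    field_simp
    ring
end

section
/- The Jacobian (derivative) of the map f(α, β, γ) = (π·sin(α)/S, π·sin(β)/S, π·sin(γ)/S), S = sin α + sin β + sin γ, restricted to the plane α + β + γ = π at the point (π/3, π/3, π/3), acts as scalar multiplication by π/(3√3); in particular its operator norm is π/(3√3) < 1. -/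
open Real

noncomputable def f (p : ℝ × ℝ × ℝ) : ℝ × ℝ × ℝ :=
  (π * Real.sin p.1 / (Real.sin p.1 + Real.sin p.2.1 + Real.sin p.2.2),
   π * Real.sin p.2.1 / (Real.sin p.1 + Real.sin p.2.1 + Real.sin p.2.2),
   π * Real.sin p.2.2 / (Real.sin p.1 + Real.sin p.2.1 + Real.sin p.2.2))

theorem stmt_9 :
    (∀ v : ℝ × ℝ × ℝ, v.1 + v.2.1 + v.2.2 = 0 →
      fderiv ℝ f (π / 3, π / 3, π / 3) v = (π / (3 * Real.sqrt 3)) • v) ∧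
    π / (3 * Real.sqrt 3) < 1 := by
  have hs3 : Real.sqrt 3 * Real.sqrt 3 = 3 := Real.mul_self_sqrt (by norm_num)
  have hs3pos : (0:ℝ) < Real.sqrt 3 := Real.sqrt_pos.mpr (by norm_num)
  constructor
  · set p0 : ℝ × ℝ × ℝ := (π/3, π/3, π/3) with hp0
    have L1 := ContinuousLinearMap.fst ℝ ℝ (ℝ×ℝ)
    have h1 : HasFDerivAt (fun p : ℝ×ℝ×ℝ => π * Real.sin p.1)
        ((π * Real.cos (π/3)) • ContinuousLinearMap.fst ℝ ℝ (ℝ×ℝ)) p0 :=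
      ((Real.hasDerivAt_sin _).const_mul π).comp_hasFDerivAt p0 hasFDerivAt_fst
    have h2 : HasFDerivAt (fun p : ℝ×ℝ×ℝ => π * Real.sin p.2.1)
        ((π * Real.cos (π/3)) • ((ContinuousLinearMap.fst ℝ ℝ ℝ).comp (ContinuousLinearMap.snd ℝ ℝ (ℝ×ℝ)))) p0 :=
      ((Real.hasDerivAt_sin _).const_mul π).comp_hasFDerivAt p0 (hasFDerivAt_fst.comp p0 hasFDerivAt_snd)
    have h3 : HasFDerivAt (fun p : ℝ×ℝ×ℝ => π * Real.sin p.2.2)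
        ((π * Real.cos (π/3)) • ((ContinuousLinearMap.snd ℝ ℝ ℝ).comp (ContinuousLinearMap.snd ℝ ℝ (ℝ×ℝ)))) p0 :=
      ((Real.hasDerivAt_sin _).const_mul π).comp_hasFDerivAt p0 (hasFDerivAt_snd.comp p0 hasFDerivAt_snd)
    have hs1 : HasFDerivAt (fun p : ℝ×ℝ×ℝ => Real.sin p.1)
        ((Real.cos (π/3)) • ContinuousLinearMap.fst ℝ ℝ (ℝ×ℝ)) p0 :=
      (Real.hasDerivAt_sin _).comp_hasFDerivAt p0 hasFDerivAt_fst
    have hs2 : HasFDerivAt (fun p : ℝ×ℝ×ℝ => Real.sin p.2.1)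
        ((Real.cos (π/3)) • ((ContinuousLinearMap.fst ℝ ℝ ℝ).comp (ContinuousLinearMap.snd ℝ ℝ (ℝ×ℝ)))) p0 :=
      (Real.hasDerivAt_sin _).comp_hasFDerivAt p0 (hasFDerivAt_fst.comp p0 hasFDerivAt_snd)
    have hs3' : HasFDerivAt (fun p : ℝ×ℝ×ℝ => Real.sin p.2.2)
        ((Real.cos (π/3)) • ((ContinuousLinearMap.snd ℝ ℝ ℝ).comp (ContinuousLinearMap.snd ℝ ℝ (ℝ×ℝ)))) p0 :=
      (Real.hasDerivAt_sin _).comp_hasFDerivAt p0 (hasFDerivAt_snd.comp p0 hasFDerivAt_snd)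
    have hS : HasFDerivAt (fun p : ℝ×ℝ×ℝ => Real.sin p.1 + Real.sin p.2.1 + Real.sin p.2.2) _ p0 :=
      (hs1.add hs2).add hs3'
    have hSval : (fun p : ℝ×ℝ×ℝ => Real.sin p.1 + Real.sin p.2.1 + Real.sin p.2.2) p0 = 3 * Real.sqrt 3 / 2 := by
      simp [hp0, Real.sin_pi_div_three]; ring
    have hS0 : (fun p : ℝ×ℝ×ℝ => Real.sin p.1 + Real.sin p.2.1 + Real.sin p.2.2) p0 ≠ 0 := by
      rw [hSval]; positivity
    have hinv := (hasDerivAt_inv hS0).comp_hasFDerivAt p0 hS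
    have hg1 := h1.mul hinv
    have hg2 := h2.mul hinv
    have hg3 := h3.mul hinv
    have heq : (fun p : ℝ×ℝ×ℝ =>
        ((π * Real.sin p.1) * (Real.sin p.1 + Real.sin p.2.1 + Real.sin p.2.2)⁻¹,
         (π * Real.sin p.2.1) * (Real.sin p.1 + Real.sin p.2.1 + Real.sin p.2.2)⁻¹,
         (π * Real.sin p.2.2) * (Real.sin p.1 + Real.sin p.2.1 + Real.sin p.2.2)⁻¹)) = f := by
      funext p; simp [f, div_eq_mul_inv]
    have hf := heq ▸ (HasFDerivAt.prodMk hg1 (HasFDerivAt.prodMk hg2 hg3))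
    intro v hv
    rw [hf.fderiv]
    simp only [ContinuousLinearMap.prod_apply, ContinuousLinearMap.add_apply,
      ContinuousLinearMap.smul_apply, ContinuousLinearMap.coe_comp', Function.comp_apply,
      ContinuousLinearMap.coe_fst', ContinuousLinearMap.coe_snd', smul_eq_mul, hSval,
      Real.sin_pi_div_three, Real.cos_pi_div_three, hp0]
    have hv' : v.2.2 = -v.1 - v.2.1 := by linarith
    have hne : Real.sqrt 3 ≠ 0 := ne_of_gt hs3pos
    refine Prod.ext ?_ (Prod.ext ?_ ?_) <;>
      simp [Prod.smul_def, smul_eq_mul, hv'] <;> field_simp <;> ring_nf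
  · have h1 : π < 3.15 := by linarith [Real.pi_lt_d2]
    have h2 : (1.7:ℝ) < Real.sqrt 3 := by
      nlinarith [Real.sq_sqrt (by norm_num : (3:ℝ) ≥ 0), Real.sqrt_nonneg 3]
    rw [div_lt_one (by positivity)]
    nlinarith
end

section
/- Define g on triples (a,b,c) of exterior angles (0 < a,b,c < π, a+b+c = 2π) by g(a,b,c) = (2π·sin a/S, 2π·sin b/S, 2π·sin c/S), S = sin a + sin b + sin c. Then (2π/3, 2π/3, 2π/3) is a fixed point of g, and the linearization of g at this point on the plane a+b+c = 2π is multiplication by −2π/(3√3), whose absolute value exceeds 1 (so the fixed point is repelling). -/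
open Real

noncomputable def g (p : ℝ × ℝ × ℝ) : ℝ × ℝ × ℝ :=
  (2 * π * Real.sin p.1 / (Real.sin p.1 + Real.sin p.2.1 + Real.sin p.2.2),
   2 * π * Real.sin p.2.1 / (Real.sin p.1 + Real.sin p.2.1 + Real.sin p.2.2),
   2 * π * Real.sin p.2.2 / (Real.sin p.1 + Real.sin p.2.1 + Real.sin p.2.2))

theorem stmt_12 :
    g (2 * π / 3, 2 * π / 3, 2 * π / 3) = (2 * π / 3, 2 * π / 3, 2 * π / 3) ∧
    (∀ v : ℝ × ℝ × ℝ, v.1 + v.2.1 + v.2.2 = 0 →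
      fderiv ℝ g (2 * π / 3, 2 * π / 3, 2 * π / 3) v
        = (-(2 * π) / (3 * Real.sqrt 3)) • v) ∧
    1 < |(-(2 * π) / (3 * Real.sqrt 3))| := by
  have hπ := Real.pi_pos
  have hπ3 := Real.pi_gt_three
  have h23 : (2 : ℝ) * π / 3 = π - π / 3 := by ring
  have hs : Real.sin (2 * π / 3) = Real.sqrt 3 / 2 := by
    rw [h23, Real.sin_pi_sub, Real.sin_pi_div_three]
  have hc : Real.cos (2 * π / 3) = -(1 / 2) := by
    rw [h23, Real.cos_pi_sub, Real.cos_pi_div_three]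
  have h3 : (0 : ℝ) < Real.sqrt 3 := Real.sqrt_pos.2 (by norm_num)
  have hssq : Real.sqrt 3 * Real.sqrt 3 = 3 := Real.mul_self_sqrt (by norm_num)
  have hslt : Real.sqrt 3 < 2 := by nlinarith [hssq, h3]
  have hsne : Real.sqrt 3 ≠ 0 := ne_of_gt h3
  have hSne : Real.sin (2 * π / 3) + Real.sin (2 * π / 3) + Real.sin (2 * π / 3) ≠ 0 := by
    rw [hs]; positivity
  refine ⟨?_, ?_, ?_⟩
  · have key : 2 * π * (Real.sqrt 3 / 2) /
        (Real.sqrt 3 / 2 + Real.sqrt 3 / 2 + Real.sqrt 3 / 2) = 2 * π / 3 := by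
      field_simp
      ring
    simp only [g, hs]
    rw [Prod.mk.injEq, Prod.mk.injEq]
    exact ⟨key, key, key⟩
  · intro v hv
    set p0 : ℝ × ℝ × ℝ := (2 * π / 3, 2 * π / 3, 2 * π / 3) with hp0
    set π1 : ℝ × ℝ × ℝ →L[ℝ] ℝ := ContinuousLinearMap.fst ℝ ℝ (ℝ × ℝ) with hπ1
    set π2 : ℝ × ℝ × ℝ →L[ℝ] ℝ :=
      (ContinuousLinearMap.fst ℝ ℝ ℝ).comp (ContinuousLinearMap.snd ℝ ℝ (ℝ × ℝ)) with hπ2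
    set π3 : ℝ × ℝ × ℝ →L[ℝ] ℝ :=
      (ContinuousLinearMap.snd ℝ ℝ ℝ).comp (ContinuousLinearMap.snd ℝ ℝ (ℝ × ℝ)) with hπ3
    have hP1 : HasFDerivAt (fun p : ℝ × ℝ × ℝ => p.1) π1 p0 := hasFDerivAt_fst
    have hP2 : HasFDerivAt (fun p : ℝ × ℝ × ℝ => p.2.1) π2 p0 :=
      hasFDerivAt_fst.comp p0 hasFDerivAt_snd
    have hP3 : HasFDerivAt (fun p : ℝ × ℝ × ℝ => p.2.2) π3 p0 :=
      hasFDerivAt_snd.comp p0 hasFDerivAt_snd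
    have hsin1 : HasFDerivAt (fun p : ℝ × ℝ × ℝ => Real.sin p.1)
        (Real.cos (2 * π / 3) • π1) p0 :=
      (Real.hasDerivAt_sin _).comp_hasFDerivAt p0 hP1
    have hsin2 : HasFDerivAt (fun p : ℝ × ℝ × ℝ => Real.sin p.2.1)
        (Real.cos (2 * π / 3) • π2) p0 :=
      (Real.hasDerivAt_sin _).comp_hasFDerivAt p0 hP2
    have hsin3 : HasFDerivAt (fun p : ℝ × ℝ × ℝ => Real.sin p.2.2)
        (Real.cos (2 * π / 3) • π3) p0 :=
      (Real.hasDerivAt_sin _).comp_hasFDerivAt p0 hP3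
    have hden : HasFDerivAt (fun p : ℝ × ℝ × ℝ => Real.sin p.1 + Real.sin p.2.1 + Real.sin p.2.2)
        (Real.cos (2 * π / 3) • π1 + Real.cos (2 * π / 3) • π2 + Real.cos (2 * π / 3) • π3) p0 :=
      (hsin1.add hsin2).add hsin3
    have hS0 : Real.sin p0.1 + Real.sin p0.2.1 + Real.sin p0.2.2 ≠ 0 := hSne
    have hinv : HasFDerivAt
        (fun p : ℝ × ℝ × ℝ => (Real.sin p.1 + Real.sin p.2.1 + Real.sin p.2.2)⁻¹)
        ((-((Real.sin (2 * π / 3) + Real.sin (2 * π / 3) + Real.sin (2 * π / 3)) ^ 2)⁻¹) •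
          (Real.cos (2 * π / 3) • π1 + Real.cos (2 * π / 3) • π2 + Real.cos (2 * π / 3) • π3))
        p0 :=
      (hasDerivAt_inv hSne).comp_hasFDerivAt p0 hden
    have hnum1 : HasFDerivAt (fun p : ℝ × ℝ × ℝ => 2 * π * Real.sin p.1)
        ((2 * π) • (Real.cos (2 * π / 3) • π1)) p0 := hsin1.const_mul (2 * π)
    have hnum2 : HasFDerivAt (fun p : ℝ × ℝ × ℝ => 2 * π * Real.sin p.2.1)
        ((2 * π) • (Real.cos (2 * π / 3) • π2)) p0 := hsin2.const_mul (2 * π)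
    have hnum3 : HasFDerivAt (fun p : ℝ × ℝ × ℝ => 2 * π * Real.sin p.2.2)
        ((2 * π) • (Real.cos (2 * π / 3) • π3)) p0 := hsin3.const_mul (2 * π)
    set D : ℝ × ℝ × ℝ →L[ℝ] ℝ :=
      (-((Real.sin (2 * π / 3) + Real.sin (2 * π / 3) + Real.sin (2 * π / 3)) ^ 2)⁻¹) •
        (Real.cos (2 * π / 3) • π1 + Real.cos (2 * π / 3) • π2 + Real.cos (2 * π / 3) • π3)
      with hD
    have hq1 : HasFDerivAt
        (fun p : ℝ × ℝ × ℝ => (2 * π * Real.sin p.1) *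
          (Real.sin p.1 + Real.sin p.2.1 + Real.sin p.2.2)⁻¹)
        ((2 * π * Real.sin p0.1) • D +
          (Real.sin p0.1 + Real.sin p0.2.1 + Real.sin p0.2.2)⁻¹ •
            ((2 * π) • (Real.cos (2 * π / 3) • π1))) p0 := hnum1.mul hinv
    have hq2 : HasFDerivAt
        (fun p : ℝ × ℝ × ℝ => (2 * π * Real.sin p.2.1) *
          (Real.sin p.1 + Real.sin p.2.1 + Real.sin p.2.2)⁻¹)
        ((2 * π * Real.sin p0.2.1) • D +
          (Real.sin p0.1 + Real.sin p0.2.1 + Real.sin p0.2.2)⁻¹ •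
            ((2 * π) • (Real.cos (2 * π / 3) • π2))) p0 := hnum2.mul hinv
    have hq3 : HasFDerivAt
        (fun p : ℝ × ℝ × ℝ => (2 * π * Real.sin p.2.2) *
          (Real.sin p.1 + Real.sin p.2.1 + Real.sin p.2.2)⁻¹)
        ((2 * π * Real.sin p0.2.2) • D +
          (Real.sin p0.1 + Real.sin p0.2.1 + Real.sin p0.2.2)⁻¹ •
            ((2 * π) • (Real.cos (2 * π / 3) • π3))) p0 := hnum3.mul hinv
    have hg : HasFDerivAt g
        (((2 * π * Real.sin p0.1) • D +
          (Real.sin p0.1 + Real.sin p0.2.1 + Real.sin p0.2.2)⁻¹ •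
            ((2 * π) • (Real.cos (2 * π / 3) • π1))).prod
         (((2 * π * Real.sin p0.2.1) • D +
          (Real.sin p0.1 + Real.sin p0.2.1 + Real.sin p0.2.2)⁻¹ •
            ((2 * π) • (Real.cos (2 * π / 3) • π2))).prod
          ((2 * π * Real.sin p0.2.2) • D +
          (Real.sin p0.1 + Real.sin p0.2.1 + Real.sin p0.2.2)⁻¹ •
            ((2 * π) • (Real.cos (2 * π / 3) • π3))))) p0 := by
      unfold g
      simp only [div_eq_mul_inv]
      exact HasFDerivAt.prodMk hq1 (HasFDerivAt.prodMk hq2 hq3)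
    rw [hg.fderiv]
    simp only [ContinuousLinearMap.prod_apply, ContinuousLinearMap.add_apply,
      ContinuousLinearMap.smul_apply, ContinuousLinearMap.comp_apply,
      ContinuousLinearMap.coe_fst', ContinuousLinearMap.coe_snd', smul_eq_mul,
      hπ1, hπ2, hπ3, hs, hc, hp0]
    have hDv : D v = 0 := by
      simp only [hD, ContinuousLinearMap.smul_apply, ContinuousLinearMap.add_apply,
        ContinuousLinearMap.comp_apply, ContinuousLinearMap.coe_fst',
        ContinuousLinearMap.coe_snd', smul_eq_mul, hc, hs, hπ1, hπ2, hπ3]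
      linear_combination (-(((Real.sqrt 3 / 2 + Real.sqrt 3 / 2 + Real.sqrt 3 / 2)) ^ 2)⁻¹ *
        (-(1 / 2))) * hv
    rw [hDv]
    have key : ∀ t : ℝ, 2 * π * (Real.sqrt 3 / 2) * 0 +
        (Real.sqrt 3 / 2 + Real.sqrt 3 / 2 + Real.sqrt 3 / 2)⁻¹ * (2 * π * (-(1 / 2) * t)) =
        (-(2 * π) / (3 * Real.sqrt 3)) * t := by
      intro t
      rw [mul_zero, zero_add]
      have h2 : Real.sqrt 3 ^ 2 = 3 := Real.sq_sqrt (by norm_num)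
      field_simp
      ring
    exact Prod.ext (key v.1) (Prod.ext (key v.2.1) (key v.2.2))
  · have habs : |(-(2 * π) / (3 * Real.sqrt 3))| = 2 * π / (3 * Real.sqrt 3) := by
      rw [abs_div, abs_neg, abs_of_pos (by positivity), abs_of_pos (by positivity)]
    rw [habs, lt_div_iff₀ (by positivity)]
    nlinarith [hslt, hπ3]
end

section
/- Define g on exterior-angle triples as g(a,b,c) = (2π·sin a/S, 2π·sin b/S, 2π·sin c/S), S = sin a + sin b + sin c, with 0 < a,b,c < π and a+b+c = 2π. If a < b < c then the coordinates of g(a,b,c) satisfy the reversed order: first > second > third. -/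
open Real

theorem stmt_13 (a b c : ℝ) (ha : 0 < a) (hc : c < π) (hab : a < b) (hbc : b < c)
    (hsum : a + b + c = 2 * π) :
    (g (a, b, c)).1 > (g (a, b, c)).2.1 ∧ (g (a, b, c)).2.1 > (g (a, b, c)).2.2 := by
  have hpi := Real.pi_pos
  have hbpi : b < π := lt_trans hbc hc
  have hb0 : 0 < b := lt_trans ha hab
  have hc0 : 0 < c := lt_trans hb0 hbc
  have hapi : a < π := lt_trans hab hbpi
  -- key lemma: x < y, both in (0, π), x + y > π → sin y < sin x
  have key : ∀ x y : ℝ, 0 < x → x < y → y < π → π < x + y → Real.sin y < Real.sin x := by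
    intro x y hx hxy hy hxysum
    have h1 : Real.sin x - Real.sin y = 2 * Real.sin ((x - y)/2) * Real.cos ((x + y)/2) :=
      Real.sin_sub_sin x y
    have hs : Real.sin ((x - y)/2) < 0 := by
      apply Real.sin_neg_of_neg_of_neg_pi_lt
      · linarith
      · linarith
    have hcn : Real.cos ((x + y)/2) < 0 := by
      apply Real.cos_neg_of_pi_div_two_lt_of_lt
      · linarith
      · linarith
    nlinarith
  have h1 : Real.sin b < Real.sin a := key a b ha hab hbpi (by linarith)
  have h2 : Real.sin c < Real.sin b := key b c hb0 hbc hc (by linarith)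
  have hsa : 0 < Real.sin a := Real.sin_pos_of_pos_of_lt_pi ha hapi
  have hsb : 0 < Real.sin b := Real.sin_pos_of_pos_of_lt_pi hb0 hbpi
  have hsc : 0 < Real.sin c := Real.sin_pos_of_pos_of_lt_pi hc0 hc
  have hS : 0 < Real.sin a + Real.sin b + Real.sin c := by linarith
  simp only [g]
  constructor
  · exact (div_lt_div_iff_of_pos_right hS).mpr (by nlinarith)
  · exact (div_lt_div_iff_of_pos_right hS).mpr (by nlinarith)
end

section
/- Let π/2 < β ≤ α < π. If an ic-quadrangle with obtuse angles α, β is scaled to perimeter 2π, then its longest side is |CD| = π·sin(α/2)·sin(β/2)/cos((α−β)/2) and its second-longest side is |BC| = π·sin(α/2)·cos(β/2)/sin((α+β)/2). -/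
open Real

theorem stmt_18 (α β r : ℝ) (hβ : π / 2 < β) (hβα : β ≤ α) (hα : α < π) (hr : 0 < r)
    (hperim : r * (Real.tan (α / 2) + Real.tan (β / 2)) +
              r * (Real.tan (α / 2) + Real.cot (β / 2)) +
              r * (Real.cot (α / 2) + Real.tan (β / 2)) +
              r * (Real.cot (α / 2) + Real.cot (β / 2)) = 2 * π) :
    r * (Real.tan (α / 2) + Real.tan (β / 2)) =
      π * Real.sin (α / 2) * Real.sin (β / 2) / Real.cos ((α - β) / 2) ∧
    r * (Real.tan (α / 2) + Real.cot (β / 2)) =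
      π * Real.sin (α / 2) * Real.cos (β / 2) / Real.sin ((α + β) / 2) := by
  have hπ := Real.pi_pos
  have ha1 : 0 < α / 2 := by linarith
  have ha2 : α / 2 < π / 2 := by linarith
  have hb1 : 0 < β / 2 := by linarith
  have hb2 : β / 2 < π / 2 := by linarith
  have hsa : 0 < Real.sin (α / 2) := Real.sin_pos_of_pos_of_lt_pi ha1 (by linarith)
  have hca : 0 < Real.cos (α / 2) := Real.cos_pos_of_mem_Ioo ⟨by linarith, ha2⟩
  have hsb : 0 < Real.sin (β / 2) := Real.sin_pos_of_pos_of_lt_pi hb1 (by linarith)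
  have hcb : 0 < Real.cos (β / 2) := Real.cos_pos_of_mem_Ioo ⟨by linarith, hb2⟩
  have hsub : ((α - β) / 2 : ℝ) = α / 2 - β / 2 := by ring
  have hadd : ((α + β) / 2 : ℝ) = α / 2 + β / 2 := by ring
  rw [hsub, hadd, Real.cos_sub, Real.sin_add]
  have hcd : 0 < Real.cos (α / 2) * Real.cos (β / 2) + Real.sin (α / 2) * Real.sin (β / 2) :=
    by positivity
  have hsd : 0 < Real.sin (α / 2) * Real.cos (β / 2) + Real.cos (α / 2) * Real.sin (β / 2) :=
    by positivity
  simp only [Real.tan_eq_sin_div_cos, Real.cot_eq_cos_div_sin] at hperim ⊢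
  have pa := Real.sin_sq_add_cos_sq (α / 2)
  have pb := Real.sin_sq_add_cos_sq (β / 2)
  have hsum : r * (Real.sin (α/2)/Real.cos (α/2) + Real.cos (α/2)/Real.sin (α/2)) +
      r * (Real.sin (β/2)/Real.cos (β/2) + Real.cos (β/2)/Real.sin (β/2)) = π := by
    linarith [hperim]
  have hkey : r * (Real.sin (β/2) * Real.cos (β/2) + Real.sin (α/2) * Real.cos (α/2)) =
      π * (Real.sin (α/2) * Real.cos (α/2) * Real.sin (β/2) * Real.cos (β/2)) := by
    field_simp at hsum
    linear_combination hsum - r * Real.sin (β/2) * Real.cos (β/2) * pa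
      - r * Real.sin (α/2) * Real.cos (α/2) * pb
  constructor
  · rw [div_add_div _ _ (ne_of_gt hca) (ne_of_gt hcb), eq_div_iff (ne_of_gt hcd),
      ← mul_div_assoc, div_mul_eq_mul_div,
      div_eq_iff (by positivity : Real.cos (α/2) * Real.cos (β/2) ≠ 0)]
    linear_combination hkey + r * Real.sin (α/2) * Real.cos (α/2) * pb
      + r * Real.sin (β/2) * Real.cos (β/2) * pa
  · rw [div_add_div _ _ (ne_of_gt hca) (ne_of_gt hsb), eq_div_iff (ne_of_gt hsd),
      ← mul_div_assoc, div_mul_eq_mul_div,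
      div_eq_iff (by positivity : Real.cos (α/2) * Real.sin (β/2) ≠ 0)]
    linear_combination hkey + r * Real.sin (α/2) * Real.cos (α/2) * pb
      + r * Real.sin (β/2) * Real.cos (β/2) * pa
end
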